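/- For all natural numbers N, the sum ∑_{j=0}^{N} (-1)^j / N! · C(N,j) · (N/2 - j)^N equals 1. -/
import Mathlib


open Finset fwdDiff

lemma fwdDiff_pow_aux (n : ℕ) : ∀ m : ℕ, m ≤ n → ∀ c y : ℚ,
    (Δ_[(1 : ℚ)])^[n] (fun x : ℚ ↦ (x + c) ^ m) y
      = if m = n then (n.factorial : ℚ) else 0 := by
  induction n with
  | zero =>
    intro m hm c y
    interval_cases m
    simp
  | succ n IH =>
    intro m hm c y
    rw [Function.iterate_succ_apply]
    have h1 : Δ_[(1 : ℚ)] (fun x : ℚ ↦ (x + c) ^ m)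
        = ∑ i ∈ range m, (m.choose i : ℚ) • (fun x : ℚ ↦ (x + c) ^ i) := by
      funext x
      simp only [fwdDiff, Finset.sum_apply, Pi.smul_apply, smul_eq_mul]
      rw [show x + 1 + c = (x + c) + 1 by ring, add_pow]
      rw [Finset.sum_range_succ]
      simp only [one_pow, mul_one, Nat.choose_self, Nat.cast_one, Nat.sub_self, pow_zero,
        add_sub_cancel_right]
      exact Finset.sum_congr rfl fun i _ ↦ by ring
    rw [h1, fwdDiff_iter_finset_sum]
    simp only [Finset.sum_apply, fwdDiff_iter_const_smul, Pi.smul_apply, smul_eq_mul]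
    have h2 : ∀ i ∈ range m, (m.choose i : ℚ) * (Δ_[(1 : ℚ)])^[n] (fun x : ℚ ↦ (x + c) ^ i) y
        = (m.choose i : ℚ) * (if i = n then (n.factorial : ℚ) else 0) := by
      intro i hi
      have hi' : i < m := Finset.mem_range.mp hi
      rw [IH i (by omega) c y]
    rw [Finset.sum_congr rfl h2]
    simp only [mul_ite, mul_zero]
    rw [Finset.sum_ite_eq' (range m) n fun i ↦ (m.choose i : ℚ) * n.factorial]
    rcases Nat.lt_or_ge n m with h | h
    · have hm' : m = n + 1 := by omega
      subst hm'
      rw [if_pos (Finset.mem_range.mpr n.lt_succ_self), Nat.choose_succ_self_right,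
        Nat.factorial_succ]
      simp only [if_pos trivial]
      push_cast
      ring
    · have : n ∉ range m := by simp; omega
      rw [if_neg this, if_neg (by omega)]

theorem stmt_1 (N : ℕ) :
    ∑ j ∈ range (N + 1),
      (-1 : ℚ) ^ j / Nat.factorial N * (N.choose j) * ((N : ℚ) / 2 - j) ^ N = 1 := by
  have key := fwdDiff_iter_eq_sum_shift (1 : ℚ) (fun x : ℚ ↦ (x + (-(N : ℚ) / 2)) ^ N) N 0
  rw [fwdDiff_pow_aux N N le_rfl (-(N : ℚ) / 2) 0, if_pos rfl] at key
  have hfact : (N.factorial : ℚ) ≠ 0 := by positivity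
  have goal2 : ∑ j ∈ range (N + 1),
      (-1 : ℚ) ^ j * (N.choose j) * ((N : ℚ) / 2 - j) ^ N = N.factorial := by
    rw [key]
    apply Finset.sum_congr rfl
    intro k hk
    have hk' : k ≤ N := by simp at hk; omega
    have h3 : ((-1 : ℚ)) ^ (N - k) = (-1) ^ N * (-1) ^ k := by
      rw [← pow_add, show N + k = (N - k) + 2 * k by omega, pow_add, pow_mul]
      simp
    have h4 : ((0 : ℚ) + k • (1 : ℚ) + (-(N : ℚ) / 2)) ^ N
        = (-1 : ℚ) ^ N * ((N : ℚ) / 2 - k) ^ N := by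
      rw [← neg_pow]
      congr 1
      simp
      ring
    rw [zsmul_eq_mul, h4]
    push_cast
    rw [h3]
    have h5 : ((-1 : ℚ)) ^ N * (-1 : ℚ) ^ N = 1 := by
      rw [← pow_add, show N + N = 2 * N by ring, pow_mul]
      simp
    linear_combination (-(N.choose k : ℚ) * (-1 : ℚ) ^ k * ((N : ℚ) / 2 - k) ^ N) * h5
  have hsplit : ∑ j ∈ range (N + 1),
      (-1 : ℚ) ^ j / Nat.factorial N * (N.choose j) * ((N : ℚ) / 2 - j) ^ N
      = (∑ j ∈ range (N + 1),
          (-1 : ℚ) ^ j * (N.choose j) * ((N : ℚ) / 2 - j) ^ N) / N.factorial := by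
    rw [Finset.sum_div]
    exact Finset.sum_congr rfl fun j _ ↦ by ring
  rw [hsplit, goal2, div_self hfact]
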